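/- arXiv:math-ph/0510003 — 2 statements merged into one kernel-verified Lean document; each statement's English description precedes it below -/
import Mathlib

section
/- Let (B, p⊥, τ) be a smooth solution of the static CGL system (1-τ) • (curl B × B) = grad p⊥ + τ • grad(‖B‖²/2) + (B · grad τ) • B, div B = 0, B · grad τ = 0, with τ < 1. Let Ψ : ℝ³ → ℝ be smooth with B · grad Ψ = 0, and M : ℝ → ℝ smooth and nowhere zero. Then B₁ := (M ∘ Ψ) • B, τ₁ := 1 - (1-τ)/(M ∘ Ψ)², p⊥₁ := p⊥ + (‖B‖² - ‖B₁‖²)/2 is again a solution of the static CGL system (with B₁ · grad τ₁ = 0 and div B₁ = 0). -/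
open Real

noncomputable def pd (i : Fin 3) (f : (Fin 3 → ℝ) → ℝ) (x : Fin 3 → ℝ) : ℝ :=
  fderiv ℝ f x (Pi.single i 1)

noncomputable def grad (f : (Fin 3 → ℝ) → ℝ) (x : Fin 3 → ℝ) : Fin 3 → ℝ :=
  fun i => pd i f x

noncomputable def vdiv (F : (Fin 3 → ℝ) → Fin 3 → ℝ) (x : Fin 3 → ℝ) : ℝ :=
  pd 0 (fun y => F y 0) x + pd 1 (fun y => F y 1) x + pd 2 (fun y => F y 2) x

noncomputable def curl (F : (Fin 3 → ℝ) → Fin 3 → ℝ) (x : Fin 3 → ℝ) : Fin 3 → ℝ :=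
  ![pd 1 (fun y => F y 2) x - pd 2 (fun y => F y 1) x,
    pd 2 (fun y => F y 0) x - pd 0 (fun y => F y 2) x,
    pd 0 (fun y => F y 1) x - pd 1 (fun y => F y 0) x]

def cross (u v : Fin 3 → ℝ) : Fin 3 → ℝ :=
  ![u 1 * v 2 - u 2 * v 1, u 2 * v 0 - u 0 * v 2, u 0 * v 1 - u 1 * v 0]

def dot (u v : Fin 3 → ℝ) : ℝ := u 0 * v 0 + u 1 * v 1 + u 2 * v 2

/-- The static anisotropic (CGL) plasma equilibrium system with equation of state
`B · grad τ = 0`. -/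
noncomputable def CGL (B : (Fin 3 → ℝ) → Fin 3 → ℝ) (pperp τ : (Fin 3 → ℝ) → ℝ) : Prop :=
  (∀ x, (1 - τ x) • cross (curl B x) (B x) =
      grad pperp x + τ x • grad (fun y => dot (B y) (B y) / 2) x
        + dot (B x) (grad τ x) • B x) ∧
  (∀ x, vdiv B x = 0) ∧
  (∀ x, dot (B x) (grad τ x) = 0)

section PdRules
variable {i : Fin 3} {f g : (Fin 3 → ℝ) → ℝ} {x : Fin 3 → ℝ}

theorem pd_add (hf : DifferentiableAt ℝ f x) (hg : DifferentiableAt ℝ g x) :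
    pd i (fun y => f y + g y) x = pd i f x + pd i g x := by
  unfold pd; rw [fderiv_fun_add hf hg]; rfl

theorem pd_sub (hf : DifferentiableAt ℝ f x) (hg : DifferentiableAt ℝ g x) :
    pd i (fun y => f y - g y) x = pd i f x - pd i g x := by
  unfold pd; rw [fderiv_fun_sub hf hg]; rfl

theorem pd_mul (hf : DifferentiableAt ℝ f x) (hg : DifferentiableAt ℝ g x) :
    pd i (fun y => f y * g y) x = pd i f x * g x + f x * pd i g x := by
  unfold pd; rw [fderiv_fun_mul hf hg]; simp; ring

theorem pd_const (c : ℝ) : pd i (fun _ => c) x = 0 := by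
  unfold pd; rw [fderiv_fun_const]; rfl

theorem pd_comp (M : ℝ → ℝ) (hM : DifferentiableAt ℝ M (f x)) (hf : DifferentiableAt ℝ f x) :
    pd i (fun y => M (f y)) x = deriv M (f x) * pd i f x := by
  unfold pd
  rw [show (fun y => M (f y)) = M ∘ f from rfl, fderiv_comp x hM hf]
  simp only [ContinuousLinearMap.comp_apply]
  rw [show fderiv ℝ f x (Pi.single i 1) = (fderiv ℝ f x (Pi.single i 1)) • (1:ℝ) by simp,
    ContinuousLinearMap.map_smul]
  simp [fderiv_apply_one_eq_deriv]; ring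

theorem pd_inv (hg : DifferentiableAt ℝ g x) (hg0 : g x ≠ 0) :
    pd i (fun y => (g y)⁻¹) x = -pd i g x / g x ^ 2 := by
  rw [pd_comp Inv.inv (differentiableAt_inv hg0) hg, deriv_inv]
  field_simp

theorem pd_div (hf : DifferentiableAt ℝ f x) (hg : DifferentiableAt ℝ g x) (hg0 : g x ≠ 0) :
    pd i (fun y => f y / g y) x = (pd i f x * g x - f x * pd i g x) / g x ^ 2 := by
  have h : (fun y => f y / g y) = fun y => f y * (g y)⁻¹ := by
    funext y; rw [div_eq_mul_inv]
  rw [h, pd_mul (g := fun y => (g y)⁻¹) hf (hg.inv hg0), pd_inv hg hg0]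
  field_simp; ring

theorem pd_div_const (c : ℝ) (hf : DifferentiableAt ℝ f x) :
    pd i (fun y => f y / c) x = pd i f x / c := by
  have h : (fun y => f y / c) = fun y => f y * c⁻¹ := by
    funext y; rw [div_eq_mul_inv]
  rw [h, pd_mul hf (differentiableAt_const _)]
  simp [pd_const, div_eq_mul_inv]

theorem pd_sq (hf : DifferentiableAt ℝ f x) :
    pd i (fun y => f y ^ 2) x = 2 * f x * pd i f x := by
  have h : (fun y => f y ^ 2) = fun y => f y * f y := by funext y; ring
  rw [h, pd_mul hf hf]; ring

theorem fin3_mk0 (h : (0:ℕ) < 3) : (⟨0, h⟩ : Fin 3) = 0 := rfl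
theorem fin3_mk1 (h : (1:ℕ) < 3) : (⟨1, h⟩ : Fin 3) = 1 := rfl
theorem fin3_mk2 (h : (2:ℕ) < 3) : (⟨2, h⟩ : Fin 3) = 2 := rfl

end PdRules

set_option maxHeartbeats 4000000 in
set_option linter.unusedVariables false in
/-- the infinite symmetry transformation maps static CGL equilibria
to static CGL equilibria. -/
theorem cgl_infinite_symmetry (B : (Fin 3 → ℝ) → Fin 3 → ℝ)
    (τ pperp Ψ : (Fin 3 → ℝ) → ℝ) (M : ℝ → ℝ)
    (hB : ContDiff ℝ (⊤ : ℕ∞) B) (hτ : ContDiff ℝ (⊤ : ℕ∞) τ) (hp : ContDiff ℝ (⊤ : ℕ∞) pperp)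
    (hΨ : ContDiff ℝ (⊤ : ℕ∞) Ψ) (hM : ContDiff ℝ (⊤ : ℕ∞) M)
    (hτlt : ∀ x, τ x < 1)
    (hM0 : ∀ s, M s ≠ 0)
    (hcgl : CGL B pperp τ)
    (hΨline : ∀ x, dot (B x) (grad Ψ x) = 0) :
    CGL (fun x => M (Ψ x) • B x)
      (fun x => pperp x +
        (dot (B x) (B x) - dot (M (Ψ x) • B x) (M (Ψ x) • B x)) / 2)
      (fun x => 1 - (1 - τ x) / (M (Ψ x)) ^ 2) := by
  obtain ⟨h1, h2, h3⟩ := hcgl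
  have hB' : Differentiable ℝ B := hB.differentiable (by simp)
  have hτ' : Differentiable ℝ τ := hτ.differentiable (by simp)
  have hp' : Differentiable ℝ pperp := hp.differentiable (by simp)
  have hΨ' : Differentiable ℝ Ψ := hΨ.differentiable (by simp)
  have hM' : Differentiable ℝ M := hM.differentiable (by simp)
  have hMc : ∀ (i : Fin 3) (x : Fin 3 → ℝ),
      pd i (fun y => M (Ψ y)) x = deriv M (Ψ x) * pd i Ψ x := fun i x =>
    pd_comp M (hM'.differentiableAt) (hΨ'.differentiableAt)
  have hτ1d : ∀ x, DifferentiableAt ℝ (fun y => (1 - τ y) / (M (Ψ y)) ^ 2) x := by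
    intro x
    have he : (fun y => (1 - τ y) / (M (Ψ y)) ^ 2)
        = fun y => (1 - τ y) * ((M (Ψ y)) ^ 2)⁻¹ := by
      funext y; rw [div_eq_mul_inv]
    rw [he]
    exact ((differentiableAt_const (1:ℝ)).sub hτ'.differentiableAt).mul
      (((hM'.comp hΨ').differentiableAt.pow 2).inv (pow_ne_zero _ (hM0 _)))
  refine ⟨fun x => ?_, fun x => ?_, fun x => ?_⟩
  · have H3 := h3 x
    have H4 := hΨline x
    have hdx := hτ1d x
    have H10 := congrFun (h1 x) 0
    have H11 := congrFun (h1 x) 1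
    have H12 := congrFun (h1 x) 2
    simp only [grad, curl, cross, dot, Pi.add_apply, Pi.smul_apply, smul_eq_mul,
      Matrix.cons_val_zero, Matrix.cons_val_one, Matrix.head_cons, Matrix.cons_val_two,
      Matrix.tail_cons] at H3 H4 H10 H11 H12
    simp (disch := first | assumption | fun_prop | exact pow_ne_zero _ (hM0 _) | norm_num)
      only [pd_add, pd_sub, pd_mul, pd_const, pd_div, pd_div_const, pd_sq, hMc]
      at H3 H4 H10 H11 H12
    funext j
    fin_cases j
    all_goals
      simp only [fin3_mk0, fin3_mk1, fin3_mk2, grad, curl, cross, dot, Pi.add_apply,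
        Pi.smul_apply, smul_eq_mul, Matrix.cons_val_zero, Matrix.cons_val_one,
        Matrix.head_cons, Matrix.cons_val_two, Matrix.tail_cons]
    all_goals
      simp (disch := first | assumption | fun_prop | exact pow_ne_zero _ (hM0 _) | norm_num)
        only [pd_add, pd_sub, pd_mul, pd_const, pd_div, pd_div_const, pd_sq, hMc]
    · field_simp [hM0 (Ψ x)]
      linear_combination (norm := ring_nf) 4*M (Ψ x) * H10
        - 4*(1 - τ x)*deriv M (Ψ x) * B x 0 * H4
    · field_simp [hM0 (Ψ x)]
      linear_combination (norm := ring_nf) 4*M (Ψ x) * H11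
        - 4*(1 - τ x)*deriv M (Ψ x) * B x 1 * H4
    · field_simp [hM0 (Ψ x)]
      linear_combination (norm := ring_nf) 4*M (Ψ x) * H12
        - 4*(1 - τ x)*deriv M (Ψ x) * B x 2 * H4
  · -- divergence
    have H2 := h2 x
    have H4 := hΨline x
    simp only [vdiv, grad, dot, Pi.smul_apply, smul_eq_mul] at H2 H4 ⊢
    simp (disch := first | assumption | fun_prop | exact pow_ne_zero _ (hM0 _) | norm_num)
      only [pd_add, pd_sub, pd_mul, pd_const, pd_div, pd_div_const, pd_sq, hMc] at H2 H4 ⊢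
    linear_combination M (Ψ x) * H2 + deriv M (Ψ x) * H4
  · -- B₁ · grad τ₁ = 0
    have H3 := h3 x
    have H4 := hΨline x
    have hdx := hτ1d x
    simp only [grad, dot, Pi.smul_apply, smul_eq_mul] at H3 H4 ⊢
    simp (disch := first | assumption | fun_prop | exact pow_ne_zero _ (hM0 _) | norm_num)
      only [pd_add, pd_sub, pd_mul, pd_const, pd_div, pd_div_const, pd_sq, hMc] at H3 H4 ⊢
    have hm := hM0 (Ψ x)
    field_simp
    linear_combination M (Ψ x) * H3 + 2 * (1 - τ x) * deriv M (Ψ x) * H4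
end

section
/- The transformation (p⊥ + ‖B‖²/2)' = C·(p⊥ + ‖B‖²/2), (1-τ)' = C·(1-τ), B' = B (C > 0), i.e. p⊥' = C·p⊥ + (C-1)‖B‖²/2 and τ' = 1 - C(1-τ), maps solutions of the static CGL system (1-τ)curl B × B = grad p⊥ + τ grad(‖B‖²/2) + (B·grad τ)B, div B = 0 to solutions. -/
open Real

lemma pd_comb (a b : ℝ) (f g : (Fin 3 → ℝ) → ℝ) (x : Fin 3 → ℝ)
    (hf : DifferentiableAt ℝ f x) (hg : DifferentiableAt ℝ g x) (i : Fin 3) :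
    pd i (fun y => a * f y + b * g y) x = a * pd i f x + b * pd i g x := by
  unfold pd
  rw [fderiv_fun_add (hf.const_mul a) (hg.const_mul b), fderiv_const_mul hf, fderiv_const_mul hg]
  simp

lemma pd_affine (c a : ℝ) (f : (Fin 3 → ℝ) → ℝ) (x : Fin 3 → ℝ)
    (hf : DifferentiableAt ℝ f x) (i : Fin 3) :
    pd i (fun y => c + a * f y) x = a * pd i f x := by
  unfold pd
  rw [fderiv_const_add, fderiv_const_mul hf]
  simp

/-- the scaling `(p⊥ + ‖B‖²/2)' = C(p⊥ + ‖B‖²/2)`, `(1-τ)' = C(1-τ)`,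
`B' = B` maps solutions of the static CGL system to solutions. -/
theorem cgl_scaling_symmetry (B : (Fin 3 → ℝ) → Fin 3 → ℝ)
    (pperp τ : (Fin 3 → ℝ) → ℝ) (C : ℝ) (hC : 0 < C)
    (hB : ContDiff ℝ (⊤ : ℕ∞) B) (hp : ContDiff ℝ (⊤ : ℕ∞) pperp) (hτ : ContDiff ℝ (⊤ : ℕ∞) τ)
    (hcgl : CGL B pperp τ) :
    CGL B (fun x => C * pperp x + (C - 1) * (dot (B x) (B x) / 2))
      (fun x => 1 - C * (1 - τ x)) := by
  obtain ⟨h1, h2, h3⟩ := hcgl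
  have hBd : ∀ i, Differentiable ℝ (fun y => B y i) :=
    differentiable_pi.mp (hB.differentiable (by simp))
  have hqd : Differentiable ℝ (fun y => dot (B y) (B y) / 2) := by
    have h : Differentiable ℝ (fun y => B y 0 * B y 0 + B y 1 * B y 1 + B y 2 * B y 2) :=
      (((hBd 0).mul (hBd 0)).add ((hBd 1).mul (hBd 1))).add ((hBd 2).mul (hBd 2))
    have he : (fun y => dot (B y) (B y) / 2)
        = fun y => (1/2) * (B y 0 * B y 0 + B y 1 * B y 1 + B y 2 * B y 2) := by
      funext y; unfold dot; ring
    rw [he]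
    exact h.const_mul (1/2)
  have hτd : Differentiable ℝ τ := hτ.differentiable (by simp)
  have hpd : Differentiable ℝ pperp := hp.differentiable (by simp)
  have hτ' : ∀ x j, pd j (fun y => 1 - C * (1 - τ y)) x = C * pd j τ x := by
    intro x j
    have he : (fun y => 1 - C * (1 - τ y)) = fun y => (1 - C) + C * τ y := by
      funext y; ring
    rw [he, pd_affine _ _ _ _ (hτd x)]
  refine ⟨?_, h2, ?_⟩
  · intro x
    funext i
    have hi := congrFun (h1 x) i
    simp only [Pi.add_apply, Pi.smul_apply, smul_eq_mul, grad] at hi ⊢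
    rw [pd_comb _ _ _ _ _ (hpd x) (hqd x)]
    simp only [dot, grad] at hi ⊢
    rw [hτ' x 0, hτ' x 1, hτ' x 2]
    linear_combination C * hi
  · intro x
    have hi := h3 x
    simp only [grad, dot] at hi ⊢
    rw [hτ' x 0, hτ' x 1, hτ' x 2]
    linear_combination C * hi
end
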